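/- (Necessity of numerical W^{p+1}_∞-smoothness) Let p ≥ 0 be an integer. There exists a constant C_∞ > 0 depending only on p with the following property. Let a < b, N a positive integer, h = (b−a)/N, x_i = a + i h, u : [a,b] → ℝ (p+1)-times continuously differentiable, and u^R : (a,b) → ℝ piecewise polynomial of degree at most p on the cells (x_i, x_{i+1}), with D^k_i = (u^{R(k)}(x_i⁺) − u^{R(k)}(x_i⁻)) / h^{p+1−k}. If K ≥ 0 and sup_{x ∈ (a,b)} |u(x) − u^R(x)| ≤ K h^{p+1}, then for every i with 1 ≤ i ≤ N−1, Q(D^0_i, …, D^p_i) ≤ ( K + C_∞ sup_{[a,b]} |u^{(p+1)}| )². -/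

import Mathlib

open MeasureTheory Polynomial

/-- `fd p d ξ = (1/2) Σ_{k=0}^p (d_k/k!) ξ^k`. -/
noncomputable def fd (p : ℕ) (d : Fin (p+1) → ℝ) (ξ : ℝ) : ℝ :=
  (1/2) * ∑ k : Fin (p+1), d k / (Nat.factorial k) * ξ ^ (k : ℕ)

/-- The error functional whose infimum over polynomials of degree ≤ p defines `Qform`. -/
noncomputable def Qerr (p : ℕ) (d : Fin (p+1) → ℝ) (v : Polynomial ℝ) : ℝ :=
  (∫ ξ in (-(1:ℝ)/2)..0, (v.eval ξ + fd p d ξ)^2) +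
  (∫ ξ in (0:ℝ)..(1/2), (v.eval ξ - fd p d ξ)^2)

/-- `Q(d) = inf_{v ∈ P} Qerr p d v`. -/
noncomputable def Qform (p : ℕ) (d : Fin (p+1) → ℝ) : ℝ :=
  sInf {q : ℝ | ∃ v : Polynomial ℝ, v.natDegree ≤ p ∧ q = Qerr p d v}

/-- The scaled jump vector `(D⁰,…,Dᵖ)` at a node `xi`, where `ql`/`qr` are the
polynomial pieces to the left/right of `xi`:
`Dᵏ = ((d^k/dx^k) qr(xi) - (d^k/dx^k) ql(xi)) / h^{p+1-k}`. -/
noncomputable def Dvec (p : ℕ) (h xi : ℝ) (ql qr : Polynomial ℝ) : Fin (p+1) → ℝ :=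
  fun k => ((Polynomial.derivative^[(k:ℕ)] qr).eval xi -
            (Polynomial.derivative^[(k:ℕ)] ql).eval xi) / h^(p+1-(k:ℕ))

/-!
Take `C_∞ = 1`. Near the node `xᵢ`, let `T` be the degree-`p` Taylor polynomial of `u` on
`[xᵢ - h/2, xᵢ + h/2]`, so `|u - T| ≤ S h^{p+1}` there, with `S = sup |u^{(p+1)}|`. By the
triangle inequality through `u`, `T` is within `(K + S) h^{p+1}` of the left piece on the left
half cell and of the right piece on the right half cell. In the variable `ξ = (x - xᵢ)/h` the
function `f_D` is `(q_R - q_L)(x) / (2h^{p+1})`, so the polynomial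
`v = (T - (q_L + q_R)/2) / h^{p+1}` has `v + f_D = (T - q_L)/h^{p+1}` and
`v - f_D = (T - q_R)/h^{p+1}`. Both are bounded by `K + S`, and the two integration intervals
have total length `1`, so `Q(D) ≤ Qerr(v) ≤ (K + S)²`.
-/

open Set
open scoped Nat

namespace Polynomial

theorem eval_add_eq_sum_iterate_derivative {K : Type*} [Field K] [CharZero K] {P : K[X]} {n : ℕ}
    (hP : P.natDegree ≤ n) (r t : K) :
    P.eval (r + t) = ∑ k ∈ Finset.range (n + 1), (derivative^[k] P).eval r / k ! * t ^ k := by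
  rw [add_comm, ← taylor_eval, eval_eq_sum_range' (n := n + 1) (by rw [natDegree_taylor]; omega)]
  refine Finset.sum_congr rfl fun k _ => ?_
  rw [taylor_coeff, ← factorial_smul_hasseDeriv, LinearMap.smul_apply, eval_smul, nsmul_eq_mul,
    mul_div_cancel_left₀ _ (by exact_mod_cast k.factorial_ne_zero)]

theorem natDegree_comp_linear_le {R : Type*} [Semiring R] {P : R[X]} {n : ℕ}
    (hP : P.natDegree ≤ n) (h c : R) :
    (P.comp (C h * X + C c)).natDegree ≤ n := by
  calc (P.comp (C h * X + C c)).natDegree ≤ P.natDegree * (C h * X + C c).natDegree :=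
        natDegree_comp_le
    _ ≤ n * 1 := Nat.mul_le_mul hP natDegree_linear_le
    _ = n := mul_one n

end Polynomial

theorem fd_Dvec {p : ℕ} {h : ℝ} (hh : h ≠ 0) (xi : ℝ) {ql qr : ℝ[X]}
    (hl : ql.natDegree ≤ p) (hr : qr.natDegree ≤ p) (ξ : ℝ) :
    fd p (Dvec p h xi ql qr) ξ = (qr - ql).eval (xi + h * ξ) / (2 * h ^ (p + 1)) := by
  rw [eval_add_eq_sum_iterate_derivative ((natDegree_sub_le _ _).trans (max_le hr hl)),
    Finset.sum_range, fd, Finset.sum_div, Finset.mul_sum]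
  refine Finset.sum_congr rfl fun k _ => ?_
  have hpow : h ^ (p + 1 - k) * h ^ (k : ℕ) = h ^ (p + 1) := by
    rw [← pow_add, Nat.sub_add_cancel k.is_lt.le]
  simp only [Dvec, iterate_derivative_sub, eval_sub]
  field_simp
  rw [mul_pow, ← hpow]
  ring

theorem integral_sq_le_of_forall_abs_le {f : ℝ → ℝ} {a b M : ℝ} (hab : a ≤ b)
    (hf : ∀ x ∈ Ioo a b, |f x| ≤ M) : ∫ x in a..b, f x ^ 2 ≤ M ^ 2 * (b - a) := by
  have hbound : ∀ᵐ x, x ∈ uIoc a b → ‖f x ^ 2‖ ≤ M ^ 2 := by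
    filter_upwards [Measure.ae_ne volume b] with x hxb hx
    rw [uIoc_of_le hab] at hx
    rw [Real.norm_eq_abs, abs_pow]
    exact pow_le_pow_left₀ (abs_nonneg _) (hf x ⟨hx.1, hx.2.lt_of_ne hxb⟩) 2
  calc ∫ x in a..b, f x ^ 2 ≤ ‖∫ x in a..b, f x ^ 2‖ := le_abs_self _
    _ ≤ M ^ 2 * |b - a| := intervalIntegral.norm_integral_le_of_norm_le_const_ae hbound
    _ = M ^ 2 * (b - a) := by rw [abs_of_nonneg (sub_nonneg.mpr hab)]

theorem Qerr_nonneg (p : ℕ) (d : Fin (p + 1) → ℝ) (v : ℝ[X]) : 0 ≤ Qerr p d v :=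
  add_nonneg (intervalIntegral.integral_nonneg (by norm_num) fun _ _ => sq_nonneg _)
    (intervalIntegral.integral_nonneg (by norm_num) fun _ _ => sq_nonneg _)

theorem Qform_le_sq {p : ℕ} {d : Fin (p + 1) → ℝ} {v : ℝ[X]} (hv : v.natDegree ≤ p) {M : ℝ}
    (hleft : ∀ ξ ∈ Ioo (-1 / 2) 0, |v.eval ξ + fd p d ξ| ≤ M)
    (hright : ∀ ξ ∈ Ioo 0 (1 / 2), |v.eval ξ - fd p d ξ| ≤ M) : Qform p d ≤ M ^ 2 :=
  calc Qform p d ≤ Qerr p d v :=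
        csInf_le ⟨0, by rintro _ ⟨w, -, rfl⟩; exact Qerr_nonneg p d w⟩ ⟨v, hv, rfl⟩
    _ ≤ M ^ 2 * (0 - -1 / 2) + M ^ 2 * (1 / 2 - 0) :=
        add_le_add (integral_sq_le_of_forall_abs_le (by norm_num) hleft)
          (integral_sq_le_of_forall_abs_le (by norm_num) hright)
    _ = M ^ 2 := by ring

theorem Qform_Dvec_le {p : ℕ} {h xi M : ℝ} (hh : 0 < h) {T ql qr : ℝ[X]}
    (hT : T.natDegree ≤ p) (hl : ql.natDegree ≤ p) (hr : qr.natDegree ≤ p)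
    (hleft : ∀ x ∈ Ioo (xi - h / 2) xi, |T.eval x - ql.eval x| ≤ M * h ^ (p + 1))
    (hright : ∀ x ∈ Ioo xi (xi + h / 2), |T.eval x - qr.eval x| ≤ M * h ^ (p + 1)) :
    Qform p (Dvec p h xi ql qr) ≤ M ^ 2 := by
  have hhp : 0 < h ^ (p + 1) := pow_pos hh _
  set v : ℝ[X] := C (h ^ (p + 1))⁻¹ * (T - C (1 / 2) * (ql + qr)).comp (C h * X + C xi)
  have hv : v.natDegree ≤ p :=
    (natDegree_C_mul_le _ _).trans <| natDegree_comp_linear_le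
      ((natDegree_sub_le _ _).trans <| max_le hT <| (natDegree_C_mul_le _ _).trans <|
        (natDegree_add_le _ _).trans (max_le hl hr)) _ _
  have hscale : ∀ {y : ℝ}, |y| ≤ M * h ^ (p + 1) → |y / h ^ (p + 1)| ≤ M := fun hy => by
    rwa [abs_div, abs_of_pos hhp, div_le_iff₀ hhp]
  have heval : ∀ ξ, v.eval ξ + fd p (Dvec p h xi ql qr) ξ
        = (T.eval (xi + h * ξ) - ql.eval (xi + h * ξ)) / h ^ (p + 1) ∧
      v.eval ξ - fd p (Dvec p h xi ql qr) ξ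
        = (T.eval (xi + h * ξ) - qr.eval (xi + h * ξ)) / h ^ (p + 1) := fun ξ => by
    simp only [v, fd_Dvec hh.ne' xi hl hr, eval_mul, eval_comp, eval_sub, eval_add, eval_C,
      eval_X, add_comm (h * ξ)]
    constructor <;> field_simp <;> ring
  refine Qform_le_sq hv (fun ξ hξ => ?_) (fun ξ hξ => ?_)
  · rw [(heval ξ).1]
    exact hscale (hleft _ ⟨by nlinarith [hξ.1], by nlinarith [hξ.2]⟩)
  · rw [(heval ξ).2]
    exact hscale (hright _ ⟨by nlinarith [hξ.1], by nlinarith [hξ.2]⟩)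

theorem Qform_Dvec_le_of_abs_sub_le {p : ℕ} {h xi K S : ℝ} (hh : 0 < h) {u : ℝ → ℝ}
    {T ql qr : ℝ[X]} (hT : T.natDegree ≤ p) (hl : ql.natDegree ≤ p) (hr : qr.natDegree ≤ p)
    (hTu : ∀ x ∈ Icc (xi - h / 2) (xi + h / 2), |u x - T.eval x| ≤ S * h ^ (p + 1))
    (hul : ∀ x ∈ Ioo (xi - h / 2) xi, |u x - ql.eval x| ≤ K * h ^ (p + 1))
    (hur : ∀ x ∈ Ioo xi (xi + h / 2), |u x - qr.eval x| ≤ K * h ^ (p + 1)) :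
    Qform p (Dvec p h xi ql qr) ≤ (S + K) ^ 2 := by
  refine Qform_Dvec_le hh hT hl hr (fun x hx => ?_) (fun x hx => ?_)
  · have hTx := hTu x ⟨hx.1.le, by linarith [hx.2]⟩
    linarith [hul x hx, abs_sub_le (T.eval x) (u x) (ql.eval x), abs_sub_comm (T.eval x) (u x)]
  · have hTx := hTu x ⟨by linarith [hx.1], hx.2.le⟩
    linarith [hur x hx, abs_sub_le (T.eval x) (u x) (qr.eval x), abs_sub_comm (T.eval x) (u x)]

theorem iteratedDerivWithin_eq_of_subset {𝕜 F : Type*} [NontriviallyNormedField 𝕜]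
    [NormedAddCommGroup F] [NormedSpace 𝕜 F] {f : 𝕜 → F} {s t : Set 𝕜} {n : ℕ} {x : 𝕜}
    (st : s ⊆ t) (hs : UniqueDiffOn 𝕜 s) (ht : UniqueDiffOn 𝕜 t) (hf : ContDiffOn 𝕜 n f t)
    (hx : x ∈ s) : iteratedDerivWithin n f s x = iteratedDerivWithin n f t x := by
  simp only [iteratedDerivWithin_eq_iteratedFDerivWithin,
    iteratedFDerivWithin_subset st hs ht hf hx]

theorem exists_natDegree_le_eval_eq_taylorWithinEval (f : ℝ → ℝ) (n : ℕ) (s : Set ℝ) (x₀ : ℝ) :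
    ∃ T : ℝ[X], T.natDegree ≤ n ∧ ∀ x, T.eval x = taylorWithinEval f n s x₀ x := by
  refine ⟨∑ k ∈ Finset.range (n + 1),
    C (iteratedDerivWithin k f s x₀ / k !) * (X - C x₀) ^ k, ?_, fun x => ?_⟩
  · refine natDegree_sum_le_of_forall_le _ _ fun k hk => (natDegree_C_mul_le _ _).trans ?_
    rw [natDegree_pow, natDegree_X_sub_C, mul_one]
    exact Nat.lt_succ_iff.mp (Finset.mem_range.mp hk)
  · simp [taylor_within_apply, eval_finsetSum, smul_eq_mul, div_eq_inv_mul, mul_comm, mul_left_comm]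

theorem exists_natDegree_le_abs_sub_eval_le {u : ℝ → ℝ} {n : ℕ} {a b c d S : ℝ}
    (hu : ContDiffOn ℝ (n + 1) u (Icc a b)) (hac : a ≤ c) (hcd : c < d) (hdb : d ≤ b)
    (hS : ∀ y ∈ Icc c d, |iteratedDerivWithin (n + 1) u (Icc a b) y| ≤ S) :
    ∃ T : ℝ[X], T.natDegree ≤ n ∧ ∀ x ∈ Icc c d, |u x - T.eval x| ≤ S * (d - c) ^ (n + 1) := by
  have hsub : Icc c d ⊆ Icc a b := Icc_subset_Icc hac hdb
  have hab : a < b := (hac.trans_lt hcd).trans_le hdb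
  obtain ⟨T, hT, hTeval⟩ := exists_natDegree_le_eval_eq_taylorWithinEval u n (Icc c d) c
  refine ⟨T, hT, fun x hx => ?_⟩
  have hS0 : 0 ≤ S := (abs_nonneg _).trans (hS c (left_mem_Icc.2 hcd.le))
  have hxc : 0 ≤ x - c := sub_nonneg.2 hx.1
  have hrem := taylor_mean_remainder_bound hcd.le (hu.mono hsub) hx fun y hy => by
    rw [Real.norm_eq_abs, iteratedDerivWithin_eq_of_subset hsub (uniqueDiffOn_Icc hcd)
      (uniqueDiffOn_Icc hab) (by exact_mod_cast hu) hy]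
    exact hS y hy
  calc |u x - T.eval x| = ‖u x - taylorWithinEval u n (Icc c d) c x‖ := by
        rw [hTeval, Real.norm_eq_abs]
    _ ≤ S * (x - c) ^ (n + 1) / n ! := hrem
    _ ≤ S * (x - c) ^ (n + 1) := div_le_self (by positivity) (by exact_mod_cast n.factorial_pos)
    _ ≤ S * (d - c) ^ (n + 1) := by gcongr; linarith [hx.2]

theorem exists_lt_mem_Ico_of_mem_Ico {a h x : ℝ} {N : ℕ} (hh : 0 < h)
    (hx : x ∈ Ico a (a + N * h)) : ∃ j < N, x ∈ Ico (a + j * h) (a + (j + 1) * h) := by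
  have ht : 0 ≤ (x - a) / h := div_nonneg (sub_nonneg.2 hx.1) hh.le
  refine ⟨⌊(x - a) / h⌋₊, (Nat.floor_lt ht).2 ((div_lt_iff₀ hh).2 (by linarith [hx.2])), ?_, ?_⟩
  · have := (le_div_iff₀ hh).1 (Nat.floor_le ht)
    linarith
  · have := (div_lt_iff₀ hh).1 (Nat.lt_floor_add_one ((x - a) / h))
    linarith

theorem bddAbove_abs_sub_of_eqOn_cells {u uR : ℝ → ℝ} {a b h : ℝ} {N : ℕ} (hh : 0 < h)
    (hb : b = a + N * h) (hu : ContinuousOn u (Icc a b)) (q : ℕ → ℝ[X])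
    (huR : ∀ j < N, ∀ x ∈ Ioo (a + j * h) (a + (j + 1) * h), uR x = (q j).eval x) :
    BddAbove ((fun x => |u x - uR x|) '' Ioo a b) := by
  subst hb
  have hcover : (fun x => |u x - uR x|) '' Ioo a (a + N * h) ⊆
      (⋃ j ∈ Iio N, (fun x => |u x - (q j).eval x|) '' Icc a (a + N * h)) ∪
        (fun x => |u x - uR x|) '' ((fun j : ℕ => a + j * h) '' Iio N) := by
    rintro _ ⟨x, hx, rfl⟩
    obtain ⟨j, hj, hxj⟩ := exists_lt_mem_Ico_of_mem_Ico hh (Ioo_subset_Ico_self hx)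
    rcases hxj.1.eq_or_lt with rfl | hlt
    · exact Or.inr ⟨_, ⟨j, hj, rfl⟩, rfl⟩
    · refine Or.inl (mem_biUnion hj ⟨x, Ioo_subset_Icc_self hx, ?_⟩)
      simp only [huR j hj x ⟨hlt, hxj.2⟩]
  refine BddAbove.mono hcover (BddAbove.union ?_ ?_)
  · refine (finite_Iio N).bddAbove_biUnion.2 fun j _ => ?_
    exact (isCompact_Icc.image_of_continuousOn (hu.sub (q j).continuousOn).abs).bddAbove
  · exact (((finite_Iio N).image _).image _).bddAbove

/-- necessity of numerical `W^{p+1}_∞`-smoothness: if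
`‖u - u^R‖_{L^∞(a,b)} ≤ K h^{p+1}` then `Q(Dᵢ) ≤ (K + C_∞ |u|_{W^{p+1}_∞})²` for every
interior node `i`. -/
theorem necessity_Winfty_smoothness (p : ℕ) :
    ∃ Cinf : ℝ, 0 < Cinf ∧
      ∀ (a b : ℝ), a < b → ∀ N : ℕ, 0 < N → ∀ h : ℝ, h = (b - a) / N →
      ∀ u : ℝ → ℝ, ContDiffOn ℝ (p+1) u (Set.Icc a b) →
      ∀ (uR : ℝ → ℝ) (q : ℕ → Polynomial ℝ),
        (∀ i < N, (q i).natDegree ≤ p) →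
        (∀ i < N, ∀ x ∈ Set.Ioo (a + i*h) (a + (i+1)*h), uR x = (q i).eval x) →
        ∀ K : ℝ, 0 ≤ K →
          sSup ((fun x => |u x - uR x|) '' Set.Ioo a b) ≤ K * h^(p+1) →
          ∀ i ∈ Finset.Ico 1 N,
            Qform p (Dvec p h (a + i*h) (q (i-1)) (q i)) ≤
              (K + Cinf * sSup ((fun x =>
                  |iteratedDerivWithin (p+1) u (Set.Icc a b) x|) '' Set.Icc a b))^2 := by
  refine ⟨1, one_pos, fun a b hab N hN h hh u hu uR q hdeg huR K _ hsup i hi => ?_⟩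
  obtain ⟨hi1, hiN⟩ := Finset.mem_Ico.mp hi
  have h0 : 0 < h := hh ▸ div_pos (sub_pos.2 hab) (Nat.cast_pos.2 hN)
  have hb : b = a + N * h := by rw [hh]; field_simp; ring
  set S := sSup ((fun x => |iteratedDerivWithin (p + 1) u (Icc a b) x|) '' Icc a b)
  have hS : ∀ y ∈ Icc a b, |iteratedDerivWithin (p + 1) u (Icc a b) y| ≤ S := fun y hy =>
    le_csSup (isCompact_Icc.bddAbove_image
      (hu.continuousOn_iteratedDerivWithin le_rfl (uniqueDiffOn_Icc hab)).abs) ⟨y, hy, rfl⟩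
  -- `sSup` of an unbounded set is `0`, so `hsup` says something only once this is bounded.
  have hK : ∀ j < N, ∀ x ∈ Ioo (a + j * h) (a + (j + 1) * h),
      |u x - (q j).eval x| ≤ K * h ^ (p + 1) := fun j hj x hx => by
    have hjN : (j : ℝ) + 1 ≤ N := by exact_mod_cast hj
    rw [← huR j hj x hx]
    refine (le_csSup (bddAbove_abs_sub_of_eqOn_cells h0 hb hu.continuousOn q huR)
      ⟨x, ⟨?_, ?_⟩, rfl⟩).trans hsup <;> nlinarith [hx.1, hx.2]
  have hiR : (1 : ℝ) ≤ i ∧ (i : ℝ) + 1 ≤ N := ⟨by exact_mod_cast hi1, by exact_mod_cast hiN⟩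
  obtain ⟨T, hT, hTu⟩ := exists_natDegree_le_abs_sub_eval_le (c := a + i * h - h / 2)
    (d := a + i * h + h / 2) hu (by nlinarith) (by linarith) (by nlinarith)
    fun y hy => hS y ⟨by nlinarith [hy.1], by nlinarith [hy.2]⟩
  have hcast : ((i - 1 : ℕ) : ℝ) = i - 1 := by rw [Nat.cast_sub hi1, Nat.cast_one]
  calc Qform p (Dvec p h (a + i * h) (q (i - 1)) (q i)) ≤ (S + K) ^ 2 :=
        Qform_Dvec_le_of_abs_sub_le h0 hT (hdeg _ (by omega)) (hdeg i hiN)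
          (fun x hx => by simpa only [add_sub_sub_cancel, add_halves] using hTu x hx)
          (fun x hx => hK (i - 1) (by omega) x
            (by rw [hcast]; constructor <;> linarith [hx.1, hx.2]))
          (fun x hx => hK i hiN x ⟨hx.1, by linarith [hx.2]⟩)
    _ = (K + 1 * S) ^ 2 := by ring
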